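/- As d → ∞, the infinite-time Matérn radial distribution function converges uniformly on [1,∞) to the unit step function: sup_{r≥1} |g₂(r;∞) − 1| ≤ α₂(1;1)/(2 − α₂(1;1)) → 0, and the convergence is exponentially fast since α₂(1;1) ≤ (3/4)^{d/2} · C for a constant C. -/

import Mathlib

/-!
With `α(r) = ∫₀^{arccos(r/2)} sin^d / ∫₀^{π/2} sin^d` (the Gamma-factor normalisation is exactly
`1 / ∫₀^{π/2} sin^d`), `α` is antitone, and `α(1) ≤ (√3/2)^d` because on `[0, π/3]` one has
`sin θ ≤ (√3/2) sin (θ + π/6)` while `θ ↦ θ + π/6` maps `[0, π/3]` into `[0, π/2]`.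
Since `x ↦ x / (2 - x)` is increasing, `|g₂(r) - 1| = α(r) / (2 - α(r))` is largest at `r = 1`.
-/

open Real Filter

/-- Scaled intersection volume of two unit balls in `ℝ^d` at center distance `r`:
`α₂(r;1) = c(d) ∫₀^{arccos(r/2)} sin^d θ dθ` for `r ≤ 2` and `0` for `r ≥ 2`, with
`c(d) = 2Γ(1+d/2)/(√π Γ((d+1)/2))`. -/
noncomputable def alphaUnit (d : ℕ) (r : ℝ) : ℝ :=
  if r ≤ 2 then
    (2 * Real.Gamma (1 + d / 2) / (Real.sqrt π * Real.Gamma ((d + 1) / 2))) *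
      ∫ θ in (0 : ℝ)..Real.arccos (r / 2), Real.sin θ ^ d
  else 0

/-- Infinite-time Matérn radial distribution function on `[1,∞)`:
`g₂(r;∞) = 2/(2 - α₂(r;1))`. -/
noncomputable def maternG2 (d : ℕ) (r : ℝ) : ℝ := 2 / (2 - alphaUnit d r)

theorem integral_sin_pow_zero_pi_div_two (n : ℕ) :
    ∫ x in (0 : ℝ)..π / 2, sin x ^ n = √π * Gamma ((n + 1) / 2) / (2 * Gamma (1 + n / 2)) := by
  induction n using Nat.twoStepInduction with
  | zero =>
    simp only [pow_zero, intervalIntegral.integral_const, smul_eq_mul, mul_one, Nat.cast_zero,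
      zero_add, zero_div, add_zero, Gamma_one, Gamma_one_half_eq, mul_self_sqrt pi_pos.le]
    ring
  | one =>
    have hGamma : Gamma (3 / 2) = √π / 2 := by
      rw [show (3 / 2 : ℝ) = 1 / 2 + 1 by norm_num, Gamma_add_one (by norm_num), Gamma_one_half_eq]
      ring
    norm_num [integral_sin, hGamma]
    field_simp
  | more n ih _ =>
    have hGamma_odd : Gamma ((n + 2 + 1) / 2) = (n + 1) / 2 * Gamma ((n + 1) / 2) := by
      rw [show ((n : ℝ) + 2 + 1) / 2 = (n + 1) / 2 + 1 by ring, Gamma_add_one (by positivity)]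
    have hGamma_even : Gamma (1 + (n + 2) / 2) = (1 + n / 2) * Gamma (1 + n / 2) := by
      rw [show 1 + ((n : ℝ) + 2) / 2 = 1 + n / 2 + 1 by ring, Gamma_add_one (by positivity)]
    have hΓ := (Gamma_pos_of_pos (by positivity : (0 : ℝ) < 1 + n / 2)).ne'
    simp only [integral_sin_pow, sin_zero, cos_pi_div_two, ne_eq, add_eq_zero, one_ne_zero,
      and_false, not_false_eq_true, zero_pow, mul_zero, ih]
    push_cast
    rw [hGamma_odd, hGamma_even]
    field_simp
    ring

lemma integral_sin_pow_zero_pi_div_two_pos (n : ℕ) : 0 < ∫ x in (0 : ℝ)..π / 2, sin x ^ n := by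
  rw [integral_sin_pow_zero_pi_div_two]
  have := Gamma_pos_of_pos (by positivity : (0 : ℝ) < (n + 1) / 2)
  have := Gamma_pos_of_pos (by positivity : (0 : ℝ) < 1 + n / 2)
  positivity

lemma alphaUnit_of_le_two (d : ℕ) {r : ℝ} (hr : r ≤ 2) :
    alphaUnit d r = (∫ θ in (0 : ℝ)..arccos (r / 2), sin θ ^ d) /
      ∫ θ in (0 : ℝ)..π / 2, sin θ ^ d := by
  rw [alphaUnit, if_pos hr, integral_sin_pow_zero_pi_div_two, div_div_eq_mul_div, mul_comm,
    ← mul_div_assoc]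

lemma integral_sin_pow_nonneg {b : ℝ} (n : ℕ) (hb₀ : 0 ≤ b) (hbπ : b ≤ π) :
    0 ≤ ∫ x in (0 : ℝ)..b, sin x ^ n :=
  intervalIntegral.integral_nonneg hb₀ fun _ hx ↦
    pow_nonneg (sin_nonneg_of_nonneg_of_le_pi hx.1 (hx.2.trans hbπ)) n

lemma integral_sin_pow_mono {a b c e : ℝ} (n : ℕ) (hc₀ : 0 ≤ c) (hca : c ≤ a) (hab : a ≤ b)
    (hbe : b ≤ e) (heπ : e ≤ π) :
    ∫ x in a..b, sin x ^ n ≤ ∫ x in c..e, sin x ^ n := by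
  refine intervalIntegral.integral_mono_interval hca hab hbe ?_
    ((continuous_sin.pow n).intervalIntegrable _ _)
  filter_upwards [MeasureTheory.ae_restrict_mem measurableSet_Ioc] with x hx
  exact pow_nonneg (sin_nonneg_of_nonneg_of_le_pi (hc₀.trans hx.1.le) (hx.2.trans heπ)) n

lemma alphaUnit_nonneg (d : ℕ) (r : ℝ) : 0 ≤ alphaUnit d r := by
  by_cases hr : r ≤ 2
  · rw [alphaUnit_of_le_two d hr]
    exact div_nonneg (integral_sin_pow_nonneg d (arccos_nonneg _) (arccos_le_pi _))
      (integral_sin_pow_zero_pi_div_two_pos d).le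
  · simp [alphaUnit, hr]

lemma alphaUnit_antitone (d : ℕ) : Antitone (alphaUnit d) := by
  intro r s hrs
  by_cases hs : s ≤ 2
  · rw [alphaUnit_of_le_two d hs, alphaUnit_of_le_two d (hrs.trans hs)]
    gcongr
    · exact (integral_sin_pow_zero_pi_div_two_pos d).le
    · exact integral_sin_pow_mono d le_rfl le_rfl (arccos_nonneg _)
        (arccos_le_arccos (by linarith)) (arccos_le_pi _)
  · simpa [alphaUnit, hs] using alphaUnit_nonneg d r

/-- On `[0, π/3]`, where `tan θ ≤ √3`, this is `sin θ ≤ (3 sin θ + √3 cos θ) / 4`. -/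
lemma sin_le_mul_sin_add_pi_div_six {θ : ℝ} (hθ₀ : 0 ≤ θ) (hθ : θ ≤ π / 3) :
    sin θ ≤ √3 / 2 * sin (θ + π / 6) := by
  have hcos : 1 / 2 ≤ cos θ := by
    rw [← cos_pi_div_three]
    exact cos_le_cos_of_nonneg_of_le_pi hθ₀ (by linarith [pi_pos]) hθ
  have hsin : sin θ ≤ √3 / 2 := by
    rw [← sin_pi_div_three]
    exact sin_le_sin_of_le_of_le_pi_div_two (by linarith [pi_pos]) (by linarith [pi_pos]) hθ
  rw [sin_add, cos_pi_div_six, sin_pi_div_six]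
  nlinarith [mul_self_sqrt (show (0 : ℝ) ≤ 3 by norm_num), sqrt_nonneg 3]

lemma integral_sin_pow_zero_pi_div_three_le (n : ℕ) :
    ∫ x in (0 : ℝ)..π / 3, sin x ^ n ≤ (√3 / 2) ^ n * ∫ x in (0 : ℝ)..π / 2, sin x ^ n := by
  have hπ := pi_pos
  calc ∫ x in (0 : ℝ)..π / 3, sin x ^ n
      ≤ ∫ x in (0 : ℝ)..π / 3, (√3 / 2 * sin (x + π / 6)) ^ n := by
        refine intervalIntegral.integral_mono_on (by positivity)
          ((continuous_sin.pow n).intervalIntegrable _ _)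
          (Continuous.intervalIntegrable (by fun_prop) _ _) fun x hx ↦ ?_
        exact pow_le_pow_left₀ (sin_nonneg_of_nonneg_of_le_pi hx.1 (by linarith [hx.2]))
          (sin_le_mul_sin_add_pi_div_six hx.1 hx.2) n
    _ = (√3 / 2) ^ n * ∫ x in π / 6..π / 2, sin x ^ n := by
        simp_rw [mul_pow, intervalIntegral.integral_const_mul,
          intervalIntegral.integral_comp_add_right (fun x ↦ sin x ^ n)]
        ring_nf
    _ ≤ (√3 / 2) ^ n * ∫ x in (0 : ℝ)..π / 2, sin x ^ n := by
        gcongr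
        exact integral_sin_pow_mono n le_rfl (by positivity) (by linarith) le_rfl (by linarith)

lemma alphaUnit_one_le (d : ℕ) : alphaUnit d 1 ≤ (√3 / 2) ^ d := by
  have harccos : arccos (1 / 2) = π / 3 := by
    rw [← cos_pi_div_three, arccos_cos (by positivity) (by linarith [pi_pos])]
  rw [alphaUnit_of_le_two d (by norm_num), harccos,
    div_le_iff₀ (integral_sin_pow_zero_pi_div_two_pos d)]
  exact integral_sin_pow_zero_pi_div_three_le d

lemma sqrt_three_div_two_lt_one : √3 / 2 < 1 := by
  rw [div_lt_one two_pos, sqrt_lt' two_pos]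
  norm_num

lemma alphaUnit_one_le_one (d : ℕ) : alphaUnit d 1 ≤ 1 :=
  (alphaUnit_one_le d).trans (pow_le_one₀ (by positivity) sqrt_three_div_two_lt_one.le)

lemma tendsto_alphaUnit_one : Tendsto (fun d ↦ alphaUnit d 1) atTop (nhds 0) :=
  squeeze_zero (fun d ↦ alphaUnit_nonneg d 1) alphaUnit_one_le
    (tendsto_pow_atTop_nhds_zero_of_lt_one (by positivity) sqrt_three_div_two_lt_one)

lemma div_two_sub_le_div_two_sub {a b : ℝ} (hab : a ≤ b) (hb : b < 2) :
    a / (2 - a) ≤ b / (2 - b) := by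
  rw [div_le_div_iff₀ (by linarith) (by linarith)]
  nlinarith

lemma maternG2_sub_one {d : ℕ} {r : ℝ} (h : alphaUnit d r ≠ 2) :
    maternG2 d r - 1 = alphaUnit d r / (2 - alphaUnit d r) := by
  rw [maternG2, div_sub_one (sub_ne_zero.mpr h.symm)]
  ring_nf

lemma abs_maternG2_sub_one_le (d : ℕ) {r : ℝ} (hr : 1 ≤ r) :
    |maternG2 d r - 1| ≤ alphaUnit d 1 / (2 - alphaUnit d 1) := by
  have hαr : alphaUnit d r ≤ alphaUnit d 1 := alphaUnit_antitone d hr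
  have hα1 := alphaUnit_one_le_one d
  rw [maternG2_sub_one (by linarith), abs_of_nonneg (div_nonneg (alphaUnit_nonneg d r)
    (by linarith))]
  exact div_two_sub_le_div_two_sub hαr (by linarith)

/-- As `d → ∞`, the infinite-time Matérn radial distribution function converges
uniformly on `[1,∞)` to the unit step: `sup_{r ≥ 1} |g₂(r;∞) − 1| ≤
α₂(1;1)/(2 − α₂(1;1)) → 0`, and the convergence is exponentially fast since
`α₂(1;1) ≤ C (3/4)^{d/2}` for some constant `C`. -/
theorem matern_g2_uniform_convergence :
    (∀ d : ℕ, 1 ≤ d → ∀ r : ℝ, 1 ≤ r →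
        |maternG2 d r - 1| ≤ alphaUnit d 1 / (2 - alphaUnit d 1)) ∧
      Tendsto (fun d : ℕ => alphaUnit d 1 / (2 - alphaUnit d 1)) atTop (nhds 0) ∧
      ∃ C : ℝ, ∀ d : ℕ, 1 ≤ d → alphaUnit d 1 ≤ (3 / 4 : ℝ) ^ ((d : ℝ) / 2) * C := by
  refine ⟨fun d _ r hr ↦ abs_maternG2_sub_one_le d hr, ?_, 1, fun d _ ↦ ?_⟩
  · convert tendsto_alphaUnit_one.div
      ((tendsto_const_nhds (x := (2 : ℝ))).sub tendsto_alphaUnit_one) (by norm_num) using 2 <;>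
      norm_num
  · have h34 : (3 / 4 : ℝ) = (√3 / 2) ^ (2 : ℝ) := by
      rw [rpow_two, div_pow, sq_sqrt (by norm_num)]
      norm_num
    rw [mul_one, h34, ← rpow_mul (by positivity), mul_div_cancel₀ _ two_ne_zero, rpow_natCast]
    exact alphaUnit_one_le d
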